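/- Let d ≥ 5 be odd and let G = (V, E) be a finite simple graph with maximum degree at most d. Set m = (d−1)/2. Then there is a partition V = V_1 ∪ ⋯ ∪ V_m into m pairwise disjoint parts such that: the induced subgraph G[V_i] has maximum degree at most 1 for every 1 ≤ i ≤ m − 2; the induced subgraphs G[V_{m−1}] and G[V_m] have maximum degree at most 2; every vertex of V_{m−1} with exactly 2 neighbours in V_{m−1} has exactly 2 neighbours in each V_i with i ≤ m − 2 and exactly 3 neighbours in V_m; and every vertex of V_m with exactly 2 neighbours in V_m has at least 2 neighbours in each V_i with i ≤ m − 1 and at most 3 neighbours in V_{m−1}. -/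

import Mathlib

/-! Give the parts the weights `c = 5, …, 5, 4, 3` (the last two for `V_{m-1}` and `V_m`) and
take a partition minimising the total weight of monochromatic edges, an edge inside a part
counting with the weight of that part. Moving one vertex `v` from its part `j` to a part `k`
changes this potential by `2 (c k · n_k - c j · n_j)`, where `n_i` is the number of neighbours of
`v` in part `i`; so at a minimum `t := c j · n_j ≤ c k · n_k` for all `k`. As the `n_k` add up to
at most `2m + 1`, a value `t ≥ 9` would force at least `2 (m - 2) + 3 + 3` neighbours, hence
`t ≤ 8`. This bounds the degree inside each part, and in the extreme cases `t = 8` (`v ∈ V_{m-1}`,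
`n_j = 2`) and `t = 6` (`v ∈ V_m`, `n_j = 2`) the neighbour count is tight enough to pin down the
`n_k`. -/

/-- The number of neighbours of `v` (in `G`) lying in the part `P ⁻¹' {i}`. -/
def nbrCountIn {V : Type*} [Fintype V] (G : SimpleGraph V) [DecidableRel G.Adj]
    {α : ℕ} (P : V → Fin α) (v : V) (i : Fin α) : ℕ :=
  ((G.neighborFinset v).filter (fun u => P u = i)).card

open Finset

section PairSum

variable {V M : Type*} [Fintype V] [DecidableEq V] [AddCommMonoid M]

theorem sum_sum_eq_two_nsmul_add_sum_sum_erase (f : V → V → M) (hsymm : ∀ u w, f u w = f w u)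
    (v : V) (hv : f v v = 0) :
    ∑ u, ∑ w, f u w = 2 • ∑ w, f v w + ∑ u ∈ univ.erase v, ∑ w ∈ univ.erase v, f u w := by
  have hcol : ∑ u ∈ univ.erase v, f u v = ∑ w, f v w := by
    rw [sum_erase univ (f := (f · v)) hv]; exact sum_congr rfl fun u _ => hsymm u v
  calc ∑ u, ∑ w, f u w
      = ∑ w, f v w + ∑ u ∈ univ.erase v, (f u v + ∑ w ∈ univ.erase v, f u w) := by
        rw [← add_sum_erase _ _ (mem_univ v)]
        simp only [add_sum_erase _ _ (mem_univ v)]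
    _ = _ := by rw [sum_add_distrib, hcol, two_nsmul, add_assoc]

end PairSum

section LocalOptimum

variable {V ι : Type*} (G : SimpleGraph V) [DecidableRel G.Adj] [DecidableEq ι]

def monoWeight (c : ι → ℕ) (P : V → ι) (u w : V) : ℕ :=
  if G.Adj u w ∧ P u = P w then c (P u) else 0

theorem sum_monoWeight [Fintype V] (c : ι → ℕ) (P : V → ι) (v : V) :
    ∑ w, monoWeight G c P v w = c (P v) * #{w ∈ G.neighborFinset v | P w = P v} := by
  simp only [monoWeight]
  rw [sum_ite, sum_const_zero, add_zero, sum_const, smul_eq_mul, mul_comm]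
  congr 2
  ext w
  simp [eq_comm]

theorem monoWeight_comm (c : ι → ℕ) (P : V → ι) (u w : V) :
    monoWeight G c P u w = monoWeight G c P w u := by
  by_cases h : P u = P w <;> simp [monoWeight, G.adj_comm u w, h, eq_comm]

theorem exists_forall_weight_mul_card_le [Fintype V] [Finite ι] [Nonempty ι] (c : ι → ℕ) :
    ∃ P : V → ι, ∀ v k, c (P v) * #{w ∈ G.neighborFinset v | P w = P v} ≤
      c k * #{w ∈ G.neighborFinset v | P w = k} := by
  classical
  have := Fintype.ofFinite ι
  obtain ⟨P, -, hmin⟩ := exists_min_image univ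
    (fun Q : V → ι => ∑ u, ∑ w, monoWeight G c Q u w) univ_nonempty
  refine ⟨P, fun v k => ?_⟩
  have hsplit : ∀ Q : V → ι, (∀ u ≠ v, Q u = P u) →
      ∑ u, ∑ w, monoWeight G c Q u w = 2 * (c (Q v) * #{w ∈ G.neighborFinset v | P w = Q v}) +
        ∑ u ∈ univ.erase v, ∑ w ∈ univ.erase v, monoWeight G c P u w := by
    intro Q hQ
    rw [sum_sum_eq_two_nsmul_add_sum_sum_erase _ (monoWeight_comm G c Q) v (by simp [monoWeight]),
      sum_monoWeight, smul_eq_mul]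
    have hnbr : {w ∈ G.neighborFinset v | Q w = Q v} = {w ∈ G.neighborFinset v | P w = Q v} :=
      filter_congr fun w hw => by rw [hQ w (G.ne_of_adj ((G.mem_neighborFinset v w).1 hw)).symm]
    have hrest : ∑ u ∈ univ.erase v, ∑ w ∈ univ.erase v, monoWeight G c Q u w =
        ∑ u ∈ univ.erase v, ∑ w ∈ univ.erase v, monoWeight G c P u w :=
      sum_congr rfl fun u hu => sum_congr rfl fun w hw => by
        simp only [monoWeight, hQ u (ne_of_mem_erase hu), hQ w (ne_of_mem_erase hw)]
    rw [hnbr, hrest]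
  have := hmin (Function.update P v k) (mem_univ _)
  rw [hsplit P (fun _ _ => rfl), hsplit _ (fun u hu => Function.update_of_ne hu k P),
    Function.update_self] at this
  omega

end LocalOptimum

section PartWeight

variable {ι : Type*} [DecidableEq ι] {mid top : ι}

def partWeight (mid top : ι) (i : ι) : ℕ :=
  if i = top then 3 else if i = mid then 4 else 5

theorem partWeight_top : partWeight mid top top = 3 := if_pos rfl

theorem partWeight_mid (hne : mid ≠ top) : partWeight mid top mid = 4 := by
  simp [partWeight, hne]

theorem partWeight_of_ne {i : ι} (hmid : i ≠ mid) (htop : i ≠ top) : partWeight mid top i = 5 := by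
  simp [partWeight, hmid, htop]

theorem partWeight_le_five (i : ι) : partWeight mid top i ≤ 5 := by
  unfold partWeight; split_ifs <;> omega

theorem two_le_of_six_le_partWeight_mul {i : ι} {n : ℕ} (h : 6 ≤ partWeight mid top i * n) :
    2 ≤ n := by
  have := h.trans (Nat.mul_le_mul_right n (partWeight_le_five (mid := mid) (top := top) i))
  omega

variable [Fintype ι] (hne : mid ≠ top) {a : ι → ℕ} (hsum : ∑ i, a i ≤ 2 * Fintype.card ι + 1)
include hne hsum

theorem add_le_of_two_le_of_sum_le (hlow : ∀ i, i ≠ mid → i ≠ top → 2 ≤ a i) :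
    a mid + a top ≤ 5 ∧ ∀ k, k ≠ mid → k ≠ top → a k + a mid + a top ≤ 7 := by
  set O : Finset ι := {mid, top}ᶜ
  have hO : ∀ i ∈ O, 2 ≤ a i := fun i hi => by
    simp only [O, mem_compl, mem_insert, mem_singleton, not_or] at hi
    exact hlow i hi.1 hi.2
  have hsplit : ∑ i, a i = a mid + a top + ∑ i ∈ O, a i := by
    rw [← sum_add_sum_compl {mid, top}, sum_pair hne]
  have hcard : #O + 2 = Fintype.card ι := by
    rw [← card_compl_add_card {mid, top}, card_pair hne]
  have hOsum : #O • 2 ≤ ∑ i ∈ O, a i := card_nsmul_le_sum O a 2 hO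
  refine ⟨by rw [smul_eq_mul] at hOsum; omega, fun k hkmid hktop => ?_⟩
  have hk : k ∈ O := by simp [O, hkmid, hktop]
  have hrest : #(O.erase k) • 2 ≤ ∑ i ∈ O.erase k, a i :=
    card_nsmul_le_sum _ a 2 fun i hi => hO i (mem_of_mem_erase hi)
  rw [← add_sum_erase O a hk] at hsplit
  rw [card_erase_of_mem hk, smul_eq_mul] at hrest
  omega

theorem le_eight_of_forall_le_partWeight_mul {t : ℕ} (h : ∀ k, t ≤ partWeight mid top k * a k) :
    t ≤ 8 := by
  by_contra! ht
  have hmid := h mid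
  have htop := h top
  rw [partWeight_mid hne] at hmid
  rw [partWeight_top] at htop
  have := (add_le_of_two_le_of_sum_le hne hsum fun i _ _ =>
    two_le_of_six_le_partWeight_mul ((by omega : 6 ≤ t).trans (h i))).1
  omega

theorem eq_of_forall_eight_le_partWeight_mul (h : ∀ k, 8 ≤ partWeight mid top k * a k) :
    a mid = 2 ∧ a top = 3 ∧ ∀ i, i ≠ mid → i ≠ top → a i = 2 := by
  have hlow i : 2 ≤ a i := two_le_of_six_le_partWeight_mul ((by omega : 6 ≤ 8).trans (h i))
  have htop := h top
  rw [partWeight_top] at htop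
  obtain ⟨hpair, hk⟩ := add_le_of_two_le_of_sum_le hne hsum fun i _ _ => hlow i
  have hmid := hlow mid
  refine ⟨by omega, by omega, fun i himid hitop => ?_⟩
  have := hk i himid hitop
  have := hlow i
  omega

theorem add_le_five_of_forall_six_le_partWeight_mul (h : ∀ k, 6 ≤ partWeight mid top k * a k) :
    a mid + a top ≤ 5 :=
  (add_le_of_two_le_of_sum_le hne hsum fun i _ _ => two_le_of_six_le_partWeight_mul (h i)).1

end PartWeight

theorem sum_card_filter_neighborFinset_eq_degree {V ι : Type*} [Fintype V] (G : SimpleGraph V)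
    [DecidableRel G.Adj] [Fintype ι] [DecidableEq ι] (P : V → ι) (v : V) :
    ∑ i, #{w ∈ G.neighborFinset v | P w = i} = G.degree v := by
  rw [← card_eq_sum_card_fiberwise fun w _ => mem_univ (P w), G.card_neighborFinset_eq_degree]

theorem exists_partition_of_degree_le {V ι : Type*} [Fintype V] [Fintype ι] [DecidableEq ι]
    (G : SimpleGraph V) [DecidableRel G.Adj] {mid top : ι} (hne : mid ≠ top)
    (hdeg : ∀ v, G.degree v ≤ 2 * Fintype.card ι + 1) :
    ∃ P : V → ι,
      (∀ v, P v ≠ mid → P v ≠ top → #{w ∈ G.neighborFinset v | P w = P v} ≤ 1) ∧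
      (∀ v, P v = mid → #{w ∈ G.neighborFinset v | P w = P v} ≤ 2) ∧
      (∀ v, P v = top → #{w ∈ G.neighborFinset v | P w = P v} ≤ 2) ∧
      (∀ v, P v = mid → #{w ∈ G.neighborFinset v | P w = P v} = 2 →
        (∀ i, i ≠ mid → i ≠ top → #{w ∈ G.neighborFinset v | P w = i} = 2) ∧
        #{w ∈ G.neighborFinset v | P w = top} = 3) ∧
      (∀ v, P v = top → #{w ∈ G.neighborFinset v | P w = P v} = 2 →
        (∀ i, i ≠ top → 2 ≤ #{w ∈ G.neighborFinset v | P w = i}) ∧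
        #{w ∈ G.neighborFinset v | P w = mid} ≤ 3) := by
  have : Nonempty ι := ⟨mid⟩
  obtain ⟨P, hP⟩ := exists_forall_weight_mul_card_le G (partWeight mid top)
  have hsum v := (sum_card_filter_neighborFinset_eq_degree G P v).trans_le (hdeg v)
  have h8 v := le_eight_of_forall_le_partWeight_mul hne (hsum v) (hP v)
  refine ⟨P, fun v hmid htop => ?_, fun v hv => ?_, fun v hv => ?_, fun v hv h2 => ?_,
    fun v hv h2 => ?_⟩
  · have := h8 v
    rw [partWeight_of_ne hmid htop] at this
    omega
  · subst hv
    have := h8 v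
    rw [partWeight_mid hne] at this
    omega
  · subst hv
    have := h8 v
    rw [partWeight_top] at this
    omega
  · subst hv
    obtain ⟨-, htop3, hlow⟩ := eq_of_forall_eight_le_partWeight_mul hne (hsum v) fun k => by
      simpa only [h2, partWeight_mid hne] using hP v k
    exact ⟨hlow, htop3⟩
  · subst hv
    have h6 k : 6 ≤ partWeight mid (P v) k * #{w ∈ G.neighborFinset v | P w = k} := by
      simpa only [h2, partWeight_top] using hP v k
    have h5 := add_le_five_of_forall_six_le_partWeight_mul hne (hsum v) h6
    exact ⟨fun i _ => two_le_of_six_le_partWeight_mul (h6 i), by omega⟩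

/-- Parts are indexed by `Fin ((d-1)/2)`, with index `i : Fin m` corresponding to the part
`V_{i+1}`; so `V_{m-1}` has index value `m - 2` and `V_m` has index value `m - 1`. -/
theorem stmt_10 {V : Type*} [Fintype V] (d : ℕ) (hd : 5 ≤ d) (hodd : Odd d)
    (G : SimpleGraph V) [DecidableRel G.Adj] (hdeg : ∀ v : V, G.degree v ≤ d) :
    ∃ P : V → Fin ((d - 1) / 2),
      -- parts V_i, 1 ≤ i ≤ m − 2, have maximum degree at most 1
      (∀ v : V, (P v).val < (d - 1) / 2 - 2 → nbrCountIn G P v (P v) ≤ 1) ∧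
      -- part V_{m−1} has maximum degree at most 2
      (∀ v : V, (P v).val = (d - 1) / 2 - 2 → nbrCountIn G P v (P v) ≤ 2) ∧
      -- part V_m has maximum degree at most 2
      (∀ v : V, (P v).val = (d - 1) / 2 - 1 → nbrCountIn G P v (P v) ≤ 2) ∧
      -- a vertex of V_{m−1} with exactly 2 neighbours in V_{m−1} has exactly 2 neighbours in
      -- each V_i, i ≤ m − 2, and exactly 3 neighbours in V_m
      (∀ v : V, (P v).val = (d - 1) / 2 - 2 → nbrCountIn G P v (P v) = 2 →
        (∀ i : Fin ((d - 1) / 2), i.val < (d - 1) / 2 - 2 → nbrCountIn G P v i = 2) ∧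
        (∀ i : Fin ((d - 1) / 2), i.val = (d - 1) / 2 - 1 → nbrCountIn G P v i = 3)) ∧
      -- a vertex of V_m with exactly 2 neighbours in V_m has at least 2 neighbours in each V_i,
      -- i ≤ m − 1, and at most 3 neighbours in V_{m−1}
      (∀ v : V, (P v).val = (d - 1) / 2 - 1 → nbrCountIn G P v (P v) = 2 →
        (∀ i : Fin ((d - 1) / 2), i.val < (d - 1) / 2 - 1 → 2 ≤ nbrCountIn G P v i) ∧
        (∀ i : Fin ((d - 1) / 2), i.val = (d - 1) / 2 - 2 → nbrCountIn G P v i ≤ 3)) := by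
  set m := (d - 1) / 2
  have hdm : d = 2 * Fintype.card (Fin m) + 1 := by
    obtain ⟨r, hr⟩ := hodd
    rw [Fintype.card_fin]; omega
  have hm : 2 ≤ m := by omega
  let mid : Fin m := ⟨m - 2, by omega⟩
  let top : Fin m := ⟨m - 1, by omega⟩
  have hmid : mid.val = m - 2 := rfl
  have htop : top.val = m - 1 := rfl
  obtain ⟨P, h1, h2, h3, h4, h5⟩ := exists_partition_of_degree_le G
    (Fin.ne_of_val_ne (by omega) : mid ≠ top) (fun v => hdm ▸ hdeg v)
  refine ⟨P, fun v hv => h1 v (Fin.ne_of_val_ne (by omega)) (Fin.ne_of_val_ne (by omega)),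
    fun v hv => h2 v (Fin.ext hv), fun v hv => h3 v (Fin.ext hv), fun v hv h => ?_,
    fun v hv h => ?_⟩
  · obtain ⟨hlow, htop3⟩ := h4 v (Fin.ext hv) h
    exact ⟨fun i hi => hlow i (Fin.ne_of_val_ne (by omega)) (Fin.ne_of_val_ne (by omega)),
      fun i hi => (Fin.ext hi : i = top) ▸ htop3⟩
  · obtain ⟨hlow, hmid3⟩ := h5 v (Fin.ext hv) h
    exact ⟨fun i hi => hlow i (Fin.ne_of_val_ne (by omega)),
      fun i hi => (Fin.ext hi : i = mid) ▸ hmid3⟩
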